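/- Let (d_n) be integers with 1 ≤ d_n ≤ n, let λ_n ∈ (0,1), and set ε_n := 1 − λ_n. Suppose ε_n → 0 and ε_n d_n → ∞ as n → ∞. Then the near fixed point μ_n converges to f₁ in ℓ¹, i.e. ∑_{i ≥ 1} | μ_{n,i} − (f₁)_i | → 0 as n → ∞. -/

import Mathlib

open Filter Topology

/-- `β_n(x) = ∏_{i=0}^{d−1} ((x − i/n)/(1 − i/n))⁺`. -/
noncomputable def betaFn (n d : ℕ) (x : ℝ) : ℝ :=
  ∏ i ∈ Finset.range d, max ((x - (i : ℝ) / (n : ℝ)) / (1 - (i : ℝ) / (n : ℝ))) 0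

/-- The derivative `β'_n` of `β_n` away from `(d−1)/n`, set to `0` for
`x ≤ (d−1)/n`. -/
noncomputable def betaDeriv (n d : ℕ) (x : ℝ) : ℝ :=
  if ((d : ℝ) - 1) / (n : ℝ) < x then
    ∑ j ∈ Finset.range d, (1 - (j : ℝ) / (n : ℝ))⁻¹ *
      ∏ i ∈ (Finset.range d).erase j, (x - (i : ℝ) / (n : ℝ)) / (1 - (i : ℝ) / (n : ℝ))
  else 0


/-- The near fixed point: `muSeq n d lam i` is the paper's `μ_{n,i+1}`, i.e.
`μ_{n,1} = λ_n` and `μ_{n,i+1} = λ_n β_n(μ_{n,i})`. -/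
noncomputable def muSeq (n d : ℕ) (lam : ℝ) : ℕ → ℝ
  | 0 => lam
  | i + 1 => lam * betaFn n d (muSeq n d lam i)

lemma beta_nonneg (n d : ℕ) (x : ℝ) : 0 ≤ betaFn n d x :=
  Finset.prod_nonneg fun _ _ => le_max_right _ _

lemma beta_le (n d : ℕ) (hn : 1 ≤ n) (hdn : d ≤ n) {x : ℝ} (hx0 : 0 ≤ x) (hx1 : x ≤ 1) :
    betaFn n d x ≤ x ^ d := by
  have hxd : x ^ d = ∏ _i ∈ Finset.range d, x := by rw [Finset.prod_const, Finset.card_range]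
  rw [betaFn, hxd]
  refine Finset.prod_le_prod (fun _ _ => le_max_right _ _) fun i hi => ?_
  rw [Finset.mem_range] at hi
  have hin : (i : ℝ) < n := by exact_mod_cast lt_of_lt_of_le hi hdn
  have hn0 : (0:ℝ) < n := by exact_mod_cast hn
  have ha : (i:ℝ)/n < 1 := (div_lt_one hn0).mpr hin
  have ha0 : 0 ≤ (i:ℝ)/n := div_nonneg (Nat.cast_nonneg i) hn0.le
  refine max_le ?_ hx0
  rw [div_le_iff₀ (by linarith)]
  nlinarith

section fixedn
variable {n d : ℕ} {lam : ℝ}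

lemma mu_mem (hn : 1 ≤ n) (hdn : d ≤ n) (h0 : 0 < lam) (h1 : lam < 1) (i : ℕ) :
    0 ≤ muSeq n d lam i ∧ muSeq n d lam i ≤ lam := by
  induction i with
  | zero => exact ⟨h0.le, le_rfl⟩
  | succ i ih =>
    constructor
    · exact mul_nonneg h0.le (beta_nonneg n d _)
    · calc lam * betaFn n d (muSeq n d lam i) ≤ lam * (muSeq n d lam i) ^ d := by
            exact mul_le_mul_of_nonneg_left
              (beta_le n d hn hdn ih.1 (ih.2.trans h1.le)) h0.le
        _ ≤ lam * 1 := by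
            refine mul_le_mul_of_nonneg_left (pow_le_one₀ ih.1 (ih.2.trans h1.le)) h0.le
        _ = lam := mul_one lam

lemma mu_geom (hn : 1 ≤ n) (hd1 : 1 ≤ d) (hdn : d ≤ n) (h0 : 0 < lam) (h1 : lam < 1) (i : ℕ) :
    muSeq n d lam i ≤ (lam ^ d) ^ i * lam := by
  induction i with
  | zero => simp [muSeq]
  | succ i ih =>
    have hmem := mu_mem hn hdn h0 h1 i
    have key : muSeq n d lam (i+1) ≤ lam ^ d * muSeq n d lam i := by
      calc muSeq n d lam (i+1) = lam * betaFn n d (muSeq n d lam i) := rfl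
        _ ≤ lam * (muSeq n d lam i) ^ d :=
            mul_le_mul_of_nonneg_left (beta_le n d hn hdn hmem.1 (hmem.2.trans h1.le)) h0.le
        _ = lam * ((muSeq n d lam i) ^ (d-1) * muSeq n d lam i) := by
            rw [← pow_succ, Nat.sub_add_cancel hd1]
        _ ≤ lam * (lam ^ (d-1) * muSeq n d lam i) := by
            refine mul_le_mul_of_nonneg_left
              (mul_le_mul_of_nonneg_right (pow_le_pow_left₀ hmem.1 hmem.2 _) hmem.1) h0.le
        _ = lam ^ d * muSeq n d lam i := by
            rw [← mul_assoc, ← pow_succ', Nat.sub_add_cancel hd1]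
    calc muSeq n d lam (i+1) ≤ lam ^ d * muSeq n d lam i := key
      _ ≤ lam ^ d * ((lam ^ d) ^ i * lam) := by
          refine mul_le_mul_of_nonneg_left ih (pow_nonneg h0.le _)
      _ = (lam ^ d) ^ (i+1) * lam := by ring

lemma sum_bound (hn : 1 ≤ n) (hd1 : 1 ≤ d) (hdn : d ≤ n) (h0 : 0 < lam) (h1 : lam < 1) :
    ∑' i : ℕ, |muSeq n d lam i - (if i = 0 then (1 : ℝ) else 0)| ≤
      (1 - lam) + lam * lam ^ d / (1 - lam ^ d) := by
  set r := lam ^ d with hr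
  have hr0 : 0 ≤ r := pow_nonneg h0.le d
  have hr1 : r < 1 := pow_lt_one₀ h0.le h1 (by omega)
  set f : ℕ → ℝ := fun i => |muSeq n d lam i - (if i = 0 then (1 : ℝ) else 0)| with hf
  have hfs : ∀ i : ℕ, f (i+1) = muSeq n d lam (i+1) := by
    intro i
    simp only [hf]
    rw [if_neg (Nat.succ_ne_zero i), sub_zero]
    exact abs_of_nonneg (mu_mem hn hdn h0 h1 (i+1)).1
  have hle : ∀ i : ℕ, f (i+1) ≤ r ^ i * (r * lam) := by
    intro i
    rw [hfs i]
    calc muSeq n d lam (i+1) ≤ r ^ (i+1) * lam := mu_geom hn hd1 hdn h0 h1 (i+1)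
      _ = r ^ i * (r * lam) := by ring
  have hgs : Summable (fun i : ℕ => r ^ i * (r * lam)) :=
    (summable_geometric_of_lt_one hr0 hr1).mul_right _
  have hfs1 : Summable (fun i : ℕ => f (i+1)) :=
    Summable.of_nonneg_of_le (fun i => abs_nonneg _) hle hgs
  have hfsum : Summable f := (summable_nat_add_iff 1).mp hfs1
  rw [Summable.tsum_eq_zero_add hfsum]
  have hf0 : f 0 = 1 - lam := by
    have hmu : muSeq n d lam 0 = lam := rfl
    simp only [hf, hmu, if_pos rfl, if_true]
    rw [abs_sub_comm, abs_of_nonneg (by linarith)]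
  rw [hf0]
  have : ∑' i : ℕ, f (i+1) ≤ lam * r / (1 - r) := by
    calc ∑' i : ℕ, f (i+1) ≤ ∑' i : ℕ, r ^ i * (r * lam) :=
          Summable.tsum_le_tsum hle hfs1 hgs
      _ = (1 - r)⁻¹ * (r * lam) := by
          rw [tsum_mul_right, tsum_geometric_of_lt_one hr0 hr1]
      _ = lam * r / (1 - r) := by
          field_simp
  linarith

end fixedn

/-- Lemma 6.8: if `ε_n := 1 − λ_n → 0` and `ε_n d_n → ∞`, then the near fixed
point `μ_n` converges to `f₁ = (1,0,0,…)` in `ℓ¹`: `∑_{i≥1} |μ_{n,i} − (f₁)_i| → 0`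
(here `muSeq n (d n) (lam n) i` is the paper's `μ_{n,i+1}`). -/
theorem stmt12 (d : ℕ → ℕ) (hd : ∀ n : ℕ, 1 ≤ n → 1 ≤ d n ∧ d n ≤ n)
    (lam : ℕ → ℝ) (hlam : ∀ n, lam n ∈ Set.Ioo (0 : ℝ) 1)
    (heps : Tendsto (fun n => 1 - lam n) atTop (𝓝 0))
    (hepsd : Tendsto (fun n => (1 - lam n) * (d n : ℝ)) atTop atTop) :
    Tendsto (fun n =>
        ∑' i : ℕ, |muSeq n (d n) (lam n) i - (if i = 0 then (1 : ℝ) else 0)|)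
      atTop (𝓝 0) := by
  have hr : Tendsto (fun n => (lam n) ^ (d n)) atTop (𝓝 0) := by
    have hexp : Tendsto (fun n => Real.exp (-((1 - lam n) * (d n : ℝ)))) atTop (𝓝 0) :=
      Real.tendsto_exp_atBot.comp (tendsto_neg_atTop_atBot.comp hepsd)
    refine squeeze_zero' (Eventually.of_forall fun n => pow_nonneg (hlam n).1.le _)
      (Eventually.of_forall fun n => ?_) hexp
    have h1 : lam n ≤ Real.exp (-(1 - lam n)) := by
      have := Real.add_one_le_exp (-(1 - lam n))
      linarith
    calc (lam n) ^ (d n) ≤ (Real.exp (-(1 - lam n))) ^ (d n) :=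
          pow_le_pow_left₀ (hlam n).1.le h1 _
      _ = Real.exp (-((1 - lam n) * (d n : ℝ))) := by
          rw [← Real.exp_nat_mul]; ring_nf
  have hl : Tendsto lam atTop (𝓝 1) := by
    have := (tendsto_const_nhds (x := (1:ℝ))).sub heps
    simpa using this
  have hden : Tendsto (fun n => 1 - (lam n) ^ (d n)) atTop (𝓝 1) := by
    have := (tendsto_const_nhds (x := (1:ℝ))).sub hr
    simpa using this
  have hbound : Tendsto (fun n => (1 - lam n) +
      lam n * (lam n) ^ (d n) / (1 - (lam n) ^ (d n))) atTop (𝓝 0) := by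
    have := heps.add (((hl.mul hr).div hden (by norm_num)))
    simpa using this
  refine squeeze_zero'
    (Eventually.of_forall fun n => tsum_nonneg fun i => abs_nonneg _)
    ?_ hbound
  filter_upwards [eventually_ge_atTop 1] with n hn
  exact sum_bound hn (hd n hn).1 (hd n hn).2 (hlam n).1 (hlam n).2
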